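/- In the linear estimator setting with a_i ≥ 0 and nonpositive pairwise covariances, if there exists a pair i ≠ j with a_i > 0, a_j > 0, and Cov(A'_i, A'_j) < 0, then the variance inequality is strict: Var(ψ_swap) < Var(ψ_indep). -/

import Mathlib

open MeasureTheory ProbabilityTheory Finset

/-!
Expanding both variances gives `∑ i, ∑ j, a i * a j * cov[·, ·]` over the covariance matrices of
`A'` and `A`. The diagonals agree, since a `{0, 1}`-valued variable with mean `p` has variance
`p - p ^ 2`; off the diagonal the covariances of `A` vanish by independence while those of `A'`
are nonpositive. With nonnegative weights the difference of the quadratic forms is therefore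
nonpositive, and the pair `i ≠ j` with positive weights and negative covariance makes it negative.
-/

section

variable {Ω : Type*} [MeasurableSpace Ω] {μ : Measure Ω}

lemma memLp_of_forall_eq_zero_or_one [IsFiniteMeasure μ] {X : Ω → ℝ} (hXm : Measurable X)
    (hX : ∀ ω, X ω = 0 ∨ X ω = 1) (q : ENNReal) : MemLp X q μ :=
  MemLp.of_bound hXm.aestronglyMeasurable 1
    (ae_of_all _ fun ω => by rcases hX ω with h | h <;> simp [h])

lemma variance_of_forall_eq_zero_or_one [IsProbabilityMeasure μ] {X : Ω → ℝ}
    (hXm : Measurable X) (hX : ∀ ω, X ω = 0 ∨ X ω = 1) :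
    Var[X; μ] = μ[X] - μ[X] ^ 2 := by
  rw [variance_eq_sub (memLp_of_forall_eq_zero_or_one hXm hX 2)]
  congr 2
  ext ω
  rcases hX ω with h | h <;> simp [h]

lemma variance_sum_mul_add_const [IsProbabilityMeasure μ] {ι : Type*} [Fintype ι]
    {X : ι → Ω → ℝ} (hX : ∀ i, MemLp (X i) 2 μ) (a : ι → ℝ) (b : ℝ) :
    Var[fun ω => ∑ i, a i * X i ω + b; μ] = ∑ i, ∑ j, a i * a j * cov[X i, X j; μ] := by
  have haX : ∀ i, MemLp (fun ω => a i * X i ω) 2 μ := fun i => (hX i).const_mul (a i)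
  have hsum : MemLp (fun ω => ∑ i, a i * X i ω) 2 μ := memLp_finsetSum _ fun i _ => haX i
  rw [variance_add_const hsum.aestronglyMeasurable, ← covariance_self hsum.aemeasurable,
    covariance_fun_sum_fun_sum haX haX]
  simp only [covariance_const_mul_left, covariance_const_mul_right]
  exact sum_congr rfl fun i _ => sum_congr rfl fun j _ => by ring

end

lemma sum_sum_mul_mul_lt_of_le {ι : Type*} [Fintype ι] {a : ι → ℝ} (ha : ∀ i, 0 ≤ a i)
    {C C' : ι → ι → ℝ} (hle : ∀ i j, C' i j ≤ C i j)
    (hlt : ∃ i j, 0 < a i ∧ 0 < a j ∧ C' i j < C i j) :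
    ∑ i, ∑ j, a i * a j * C' i j < ∑ i, ∑ j, a i * a j * C i j := by
  obtain ⟨i, j, hai, haj, hij⟩ := hlt
  have hterm : ∀ k l, a k * a l * C' k l ≤ a k * a l * C k l := fun k l =>
    mul_le_mul_of_nonneg_left (hle k l) (mul_nonneg (ha k) (ha l))
  refine sum_lt_sum (fun k _ => sum_le_sum fun l _ => hterm k l) ⟨i, mem_univ i, ?_⟩
  exact sum_lt_sum (fun l _ => hterm i l)
    ⟨j, mem_univ j, mul_lt_mul_of_pos_left hij (mul_pos hai haj)⟩

theorem linear_estimator_strict_variance_reduction_general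
    {Ω : Type*} [MeasurableSpace Ω] (μ : Measure Ω) [IsProbabilityMeasure μ]
    (n : ℕ) (a p : Fin n → ℝ) (b : ℝ)
    (ha : ∀ i, 0 ≤ a i)
    (A' A : Fin n → Ω → ℝ)
    (hA'm : ∀ i, Measurable (A' i)) (hAm : ∀ i, Measurable (A i))
    (hA'01 : ∀ i ω, A' i ω = 0 ∨ A' i ω = 1) (hA01 : ∀ i ω, A i ω = 0 ∨ A i ω = 1)
    (hA'mean : ∀ i, ∫ ω, A' i ω ∂μ = p i) (hAmean : ∀ i, ∫ ω, A i ω ∂μ = p i)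
    (hcovle : ∀ i j, i ≠ j → ∫ ω, A' i ω * A' j ω ∂μ - p i * p j ≤ 0)
    (hIndep : iIndepFun A μ)
    (hstrict : ∃ i j, i ≠ j ∧ 0 < a i ∧ 0 < a j ∧
      ∫ ω, A' i ω * A' j ω ∂μ - p i * p j < 0)
    (ψswap ψindep : Ω → ℝ)
    (hψswap : ∀ ω, ψswap ω = ∑ i, a i * A' i ω + b)
    (hψindep : ∀ ω, ψindep ω = ∑ i, a i * A i ω + b) :
    variance ψswap μ < variance ψindep μ := by
  have hA'2 i : MemLp (A' i) 2 μ := memLp_of_forall_eq_zero_or_one (hA'm i) (hA'01 i) 2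
  have hA2 i : MemLp (A i) 2 μ := memLp_of_forall_eq_zero_or_one (hAm i) (hA01 i) 2
  have hcovA' i j : cov[A' i, A' j; μ] = ∫ ω, A' i ω * A' j ω ∂μ - p i * p j := by
    rw [covariance_eq_sub (hA'2 i) (hA'2 j), hA'mean, hA'mean]
    rfl
  have hcovA i j (hij : i ≠ j) : cov[A i, A j; μ] = 0 :=
    (hIndep.indepFun hij).covariance_eq_zero (hA2 i) (hA2 j)
  have hdiag i : cov[A' i, A' i; μ] = cov[A i, A i; μ] := by
    rw [covariance_self (hA'm i).aemeasurable, covariance_self (hAm i).aemeasurable,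
      variance_of_forall_eq_zero_or_one (hA'm i) (hA'01 i),
      variance_of_forall_eq_zero_or_one (hAm i) (hA01 i), hA'mean, hAmean]
  rw [funext hψswap, funext hψindep, variance_sum_mul_add_const hA'2,
    variance_sum_mul_add_const hA2]
  obtain ⟨i, j, hij, hai, haj, hlt⟩ := hstrict
  refine sum_sum_mul_mul_lt_of_le ha (fun k l => ?_)
    ⟨i, j, hai, haj, by rwa [hcovA' i j, hcovA i j hij]⟩
  rcases eq_or_ne k l with rfl | hkl
  · exact (hdiag k).le
  · rw [hcovA' k l, hcovA k l hkl]
    exact hcovle k l hkl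

/-- strict variance reduction for linear estimators when some pair has
positive coefficients and strictly negative covariance. -/
theorem linear_estimator_strict_variance_reduction
    {Ω : Type*} [MeasurableSpace Ω] (μ : Measure Ω) [IsProbabilityMeasure μ]
    (n : ℕ) (a p : Fin n → ℝ) (b : ℝ)
    (ha : ∀ i, 0 ≤ a i) (hp : ∀ i, p i ∈ Set.Ioo (0:ℝ) 1)
    (A' A : Fin n → Ω → ℝ)
    (hA'm : ∀ i, Measurable (A' i)) (hAm : ∀ i, Measurable (A i))
    (hA'01 : ∀ i ω, A' i ω = 0 ∨ A' i ω = 1) (hA01 : ∀ i ω, A i ω = 0 ∨ A i ω = 1)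
    (hA'mean : ∀ i, ∫ ω, A' i ω ∂μ = p i) (hAmean : ∀ i, ∫ ω, A i ω ∂μ = p i)
    (hcovle : ∀ i j, i ≠ j → ∫ ω, A' i ω * A' j ω ∂μ - p i * p j ≤ 0)
    (hIndep : iIndepFun A μ)
    (hstrict : ∃ i j, i ≠ j ∧ 0 < a i ∧ 0 < a j ∧
      ∫ ω, A' i ω * A' j ω ∂μ - p i * p j < 0)
    (ψswap ψindep : Ω → ℝ)
    (hψswap : ∀ ω, ψswap ω = ∑ i, a i * A' i ω + b)
    (hψindep : ∀ ω, ψindep ω = ∑ i, a i * A i ω + b) :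
    variance ψswap μ < variance ψindep μ :=
  linear_estimator_strict_variance_reduction_general μ n a p b ha A' A hA'm hAm hA'01 hA01 hA'mean
    hAmean hcovle hIndep hstrict ψswap ψindep hψswap hψindep
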